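/- arXiv:1710.07874 — 3 statements merged into one kernel-verified Lean document; each statement's English description precedes it below -/
import Mathlib

section
/- Let C and C' be chain complexes of F2[h]-modules and suppose there exist chain maps f: C → C' and g: C' → C such that the induced maps on homology satisfy g∗∘f∗ = multiplication by hⁿ and f∗∘g∗ = multiplication by hⁿ for some n > 0. Define u(C) to be the maximum over all h-torsion homology classes α of C of ord(α), where ord(α) is the least k with hᵏ·α = 0 (assume these maxima exist, i.e. u(C) and u(C') are finite). Then |u(C) − u(C')| ≤ n. -/
/-! Chain complexes of `F₂[h]`-modules and the order of `h`-torsion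
homology classes. -/

open CategoryTheory HomologicalComplex

noncomputable section

abbrev R : Type := Polynomial (ZMod 2)

/-- The formal variable `h`. -/
abbrev h : R := Polynomial.X

/-- An element is `h`-torsion if it is killed by some power of `h`. -/
def IsHTorsion {M : Type*} [AddCommGroup M] [Module R M] (α : M) : Prop :=
  ∃ k, h ^ k • α = 0

/-- The order of an `h`-torsion element: the least `k` with `hᵏ • α = 0`
(equal to `0` iff `α = 0`, and junk value `0` if `α` is not torsion). -/
def ord {M : Type*} [AddCommGroup M] [Module R M] (α : M) : ℕ :=
  sInf {k | h ^ k • α = 0}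

lemma ord_spec {M : Type*} [AddCommGroup M] [Module R M] {α : M}
    (hα : IsHTorsion α) : h ^ ord α • α = 0 :=
  Nat.sInf_mem hα

lemma key_bound
    (C C' : ChainComplex (ModuleCat R) ℕ)
    (f : C ⟶ C') (g : C' ⟶ C) (n : ℕ)
    (hgf : ∀ (i : ℕ) (x : C.homology i),
      homologyMap g i (homologyMap f i x) = h ^ n • x)
    (uC uC' : ℕ)
    (huC : IsGreatest {k | ∃ (i : ℕ) (α : C.homology i), IsHTorsion α ∧ ord α = k} uC)
    (huC' : IsGreatest {k | ∃ (i : ℕ) (α : C'.homology i), IsHTorsion α ∧ ord α = k} uC') :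
    uC ≤ uC' + n := by
  obtain ⟨i, α, hαt, hord⟩ := huC.1
  set β := homologyMap f i α with hβ
  have hβt : IsHTorsion β := by
    obtain ⟨k, hk⟩ := hαt
    exact ⟨k, by rw [hβ, ← map_smul, hk, map_zero]⟩
  -- torsion order of α bounded by ord β + n
  have hkill : h ^ (ord β + n) • α = 0 := by
    have : homologyMap g i (h ^ ord β • β) = h ^ (ord β + n) • α := by
      rw [map_smul, hβ, hgf, smul_smul, ← pow_add]
    rw [← this, ord_spec hβt, map_zero]
  have h1 : ord α ≤ ord β + n := Nat.sInf_le hkill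
  have h2 : ord β ≤ uC' := huC'.2 ⟨i, β, hβt, rfl⟩
  omega

/-- if chain complexes `C`, `C'` of `F₂[h]`-modules admit chain maps
`f : C → C'`, `g : C' → C` whose composites induce multiplication by `hⁿ` (`n > 0`)
on homology, and the maxima `u(C)`, `u(C')` of orders of `h`-torsion homology
classes exist, then `|u(C) − u(C')| ≤ n`. -/
theorem torsion_order_bound_crossing
    (C C' : ChainComplex (ModuleCat R) ℕ)
    (f : C ⟶ C') (g : C' ⟶ C) (n : ℕ) (hn : 0 < n)
    (hgf : ∀ (i : ℕ) (x : C.homology i),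
      homologyMap g i (homologyMap f i x) = h ^ n • x)
    (hfg : ∀ (i : ℕ) (x : C'.homology i),
      homologyMap f i (homologyMap g i x) = h ^ n • x)
    (uC uC' : ℕ)
    (huC : IsGreatest {k | ∃ (i : ℕ) (α : C.homology i), IsHTorsion α ∧ ord α = k} uC)
    (huC' : IsGreatest {k | ∃ (i : ℕ) (α : C'.homology i), IsHTorsion α ∧ ord α = k} uC') :
    uC ≤ uC' + n ∧ uC' ≤ uC + n :=
  ⟨key_bound C C' f g n hgf uC uC' huC huC',
   key_bound C' C g f n hfg uC' uC huC' huC⟩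
end
end

section
/- Let C and C' be chain complexes of F2[h]-modules with chain maps f: C → C' and g: C' → C such that g∗∘f∗ = hⁿ·id on homology. If α is an h-torsion homology class of C, then f∗(α) is an h-torsion class of C' and ord(hⁿ·α) ≤ ord(f∗(α)) ≤ ord(α); in particular ord(α) ≤ ord(f∗(α)) + n. -/
/-! Chain complexes of `F₂[h]`-modules and the order of `h`-torsion
homology classes. -/

open CategoryTheory HomologicalComplex

noncomputable section

section Torsion

variable {M N : Type*} [AddCommGroup M] [Module R M] [AddCommGroup N] [Module R N]

theorem pow_ord_smul_eq_zero {α : M} (hα : IsHTorsion α) : h ^ ord α • α = 0 :=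
  Nat.sInf_mem hα

theorem ord_le_of_pow_smul_eq_zero {α : M} {k : ℕ} (hk : h ^ k • α = 0) : ord α ≤ k :=
  Nat.sInf_le hk

theorem IsHTorsion.smul {α : M} (hα : IsHTorsion α) (r : R) : IsHTorsion (r • α) := by
  obtain ⟨k, hk⟩ := hα
  exact ⟨k, by rw [smul_comm, hk, smul_zero]⟩

theorem IsHTorsion.map {α : M} (hα : IsHTorsion α) (φ : M →ₗ[R] N) : IsHTorsion (φ α) :=
  ⟨ord α, by rw [← map_smul, pow_ord_smul_eq_zero hα, map_zero]⟩

theorem ord_map_le {α : M} (hα : IsHTorsion α) (φ : M →ₗ[R] N) : ord (φ α) ≤ ord α :=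
  ord_le_of_pow_smul_eq_zero <| by rw [← map_smul, pow_ord_smul_eq_zero hα, map_zero]

theorem ord_le_ord_pow_smul_add {α : M} {n : ℕ} (hα : IsHTorsion (h ^ n • α)) :
    ord α ≤ ord (h ^ n • α) + n :=
  ord_le_of_pow_smul_eq_zero <| by rw [pow_add, mul_smul, pow_ord_smul_eq_zero hα]

end Torsion

/-- if `g∗ ∘ f∗ = hⁿ·id` on homology and `α` is an `h`-torsion
homology class of `C`, then `f∗(α)` is `h`-torsion and
`ord(hⁿ·α) ≤ ord(f∗(α)) ≤ ord(α)`; in particular `ord(α) ≤ ord(f∗(α)) + n`. -/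
theorem torsion_order_functorial
    (C C' : ChainComplex (ModuleCat R) ℕ)
    (f : C ⟶ C') (g : C' ⟶ C) (n : ℕ)
    (hgf : ∀ (i : ℕ) (x : C.homology i),
      homologyMap g i (homologyMap f i x) = h ^ n • x)
    (i : ℕ) (α : C.homology i) (hα : IsHTorsion α) :
    IsHTorsion (homologyMap f i α) ∧
      ord (h ^ n • α) ≤ ord (homologyMap f i α) ∧
      ord (homologyMap f i α) ≤ ord α ∧
      ord α ≤ ord (homologyMap f i α) + n := by
  have hfα : IsHTorsion (homologyMap f i α) := hα.map (homologyMap f i).hom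
  have hgfα : ord (h ^ n • α) ≤ ord (homologyMap f i α) := by
    rw [← hgf i α]
    exact ord_map_le hfα (homologyMap g i).hom
  have hnα : ord α ≤ ord (h ^ n • α) + n := ord_le_ord_pow_smul_add (hα.smul _)
  exact ⟨hfα, hgfα, ord_map_le hα (homologyMap f i).hom, by omega⟩
end
end

section
/- Let C be a chain complex of free F2[h]-modules with finitely generated homology, and suppose every h-torsion class of H(C) has order ≤ n. If C' is a complex related to C by chain maps f, g with f∗g∗ = g∗f∗ = hᵏ on homology, then every torsion class of H(C') has order ≤ n + k. -/
/-! Chain complexes of `F₂[h]`-modules and the order of `h`-torsion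
homology classes. -/

open CategoryTheory HomologicalComplex

noncomputable section

lemma pow_smul_eq_zero_of_ord_le {M : Type*} [AddCommGroup M] [Module R M]
    (α : M) (ht : IsHTorsion α) {m : ℕ} (hm : ord α ≤ m) : h ^ m • α = 0 := by
  have hmem : ord α ∈ {k | h ^ k • α = 0} := Nat.sInf_mem ht
  calc h ^ m • α = h ^ (m - ord α) • (h ^ (ord α) • α) := by
        rw [smul_smul, ← pow_add, Nat.sub_add_cancel hm]
    _ = 0 := by rw [hmem]; simp

/-- let `C` be a complex of free `F₂[h]`-modules with finitely
generated homology all of whose `h`-torsion homology classes have order `≤ n`.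
If `C'` is related to `C` by chain maps `f, g` with `f∗∘g∗ = g∗∘f∗ = hᵏ` on
homology, then every `h`-torsion class of `H(C')` has order `≤ n + k`. -/
theorem torsion_order_transfer
    (C C' : ChainComplex (ModuleCat R) ℕ)
    (hfree : ∀ i : ℕ, Module.Free R (C.X i))
    (hfin : ∀ i : ℕ, Module.Finite R (C.homology i))
    (f : C ⟶ C') (g : C' ⟶ C) (k : ℕ)
    (hgf : ∀ (i : ℕ) (x : C.homology i),
      homologyMap g i (homologyMap f i x) = h ^ k • x)
    (hfg : ∀ (i : ℕ) (x : C'.homology i),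
      homologyMap f i (homologyMap g i x) = h ^ k • x)
    (n : ℕ)
    (hord : ∀ (i : ℕ) (α : C.homology i), IsHTorsion α → ord α ≤ n) :
    ∀ (i : ℕ) (β : C'.homology i), IsHTorsion β → ord β ≤ n + k := by
  intro i β hβ
  obtain ⟨m, hm⟩ := hβ
  set γ := homologyMap g i β with hγ
  have hlin : ∀ (r : R) (x : C'.homology i),
      homologyMap g i (r • x) = r • homologyMap g i x := fun r x => map_smul _ r x
  have hγtor : IsHTorsion γ := ⟨m, by rw [hγ, ← hlin, hm, map_zero]⟩
  have hγn : h ^ n • γ = 0 :=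
    pow_smul_eq_zero_of_ord_le γ hγtor (hord i γ hγtor)
  have key : h ^ (n + k) • β = 0 := by
    rw [pow_add, mul_smul, ← hfg i β, ← hγ, ← map_smul, hγn, map_zero]
  exact Nat.sInf_le key
end
end
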